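/- Let A and B be normal n×n complex matrices. Then for every index j, s_j(AB + BA) ≤ s_j( (AAᴴ + BBᴴ) ⊕ (AAᴴ + BBᴴ) ), where the right-hand matrix is the 2n×2n block diagonal matrix with both diagonal blocks equal to AAᴴ + BBᴴ. -/

import Mathlib

/-!
Put `C = AAᴴ + BBᴴ` and `D = AB + BA`. For `T = [[A, B], [-Bᴴ, -Aᴴ]]`, normality of `A` and `B`
gives `TTᴴ = (C ⊕ C) - [[0, D], [Dᴴ, 0]]`, so `C ⊕ C` dominates the Hermitian dilation of `D`.
If `vᵢ` are the right singular vectors of `D` for its `j + 1` largest singular values and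
`uᵢ = D vᵢ / sᵢ`, the vectors `(uᵢ, vᵢ)/√2` span a `(j + 1)`-dimensional subspace on which
`⟪x, (C ⊕ C) x⟫ ≥ s_j(D) ‖x‖²`, hence `‖(C ⊕ C) x‖ ≥ s_j(D) ‖x‖`, and the Courant–Fischer
min-max principle for `(C ⊕ C)ᴴ (C ⊕ C)` yields `s_j(C ⊕ C) ≥ s_j(D)`.
-/

open Matrix
open scoped ComplexOrder

/-- `singularValues X j` is the `(j+1)`-th largest singular value of `X`, i.e. the
decreasingly ordered square roots of the eigenvalues of `Xᴴ * X`. -/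
noncomputable def singularValues {m : ℕ} (X : Matrix (Fin m) (Fin m) ℂ) : Fin m → ℝ :=
  fun j => Real.sqrt
    ((Matrix.isHermitian_conjTranspose_mul_self X).eigenvalues
      (Tuple.sort (Matrix.isHermitian_conjTranspose_mul_self X).eigenvalues j.rev))

/-- `matAbs X = |X|` is the positive semidefinite square root of `Xᴴ * X`. -/
noncomputable def matAbs {m : ℕ} (X : Matrix (Fin m) (Fin m) ℂ) : Matrix (Fin m) (Fin m) ℂ :=
  (Matrix.isHermitian_conjTranspose_mul_self X).eigenvectorUnitary.1 *
    diagonal ((↑) ∘ (√·) ∘ (Matrix.isHermitian_conjTranspose_mul_self X).eigenvalues) *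
    (star (Matrix.isHermitian_conjTranspose_mul_self X).eigenvectorUnitary : Matrix (Fin m) (Fin m) ℂ)

/-- `dsum X Y = X ⊕ Y` is the block diagonal matrix with diagonal blocks `X` and `Y`. -/
noncomputable def dsum {m : ℕ} (X Y : Matrix (Fin m) (Fin m) ℂ) :
    Matrix (Fin (m + m)) (Fin (m + m)) ℂ :=
  Matrix.reindex finSumFinEquiv finSumFinEquiv (Matrix.fromBlocks X 0 0 Y)

/-- `matPosPart X = X⁺ = (|X| + X)/2`. -/
noncomputable def matPosPart {m : ℕ} (X : Matrix (Fin m) (Fin m) ℂ) : Matrix (Fin m) (Fin m) ℂ :=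
  (2 : ℂ)⁻¹ • (matAbs X + X)

/-- `matNegPart X = X⁻ = (|X| - X)/2`. -/
noncomputable def matNegPart {m : ℕ} (X : Matrix (Fin m) (Fin m) ℂ) : Matrix (Fin m) (Fin m) ℂ :=
  (2 : ℂ)⁻¹ • (matAbs X - X)

namespace Matrix

variable {ι : Type*} [Fintype ι]

lemma re_star_dotProduct_self (x : ι → ℂ) : (star x ⬝ᵥ x).re = ∑ a, ‖x a‖ ^ 2 := by
  simp [dotProduct, Complex.re_sum, Complex.mul_re, ← Complex.normSq_eq_norm_sq,
    Complex.normSq_apply]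

-- Expand `0 ≤ ‖s • x - y‖²`.
lemma sq_mul_re_star_dotProduct_self_le {x y : ι → ℂ} {s : ℝ}
    (hs : 0 ≤ s) (h : s * (star x ⬝ᵥ x).re ≤ (star x ⬝ᵥ y).re) :
    s ^ 2 * (star x ⬝ᵥ x).re ≤ (star y ⬝ᵥ y).re := by
  have h0 : 0 ≤ (star (s • x - y) ⬝ᵥ (s • x - y)).re :=
    (Complex.nonneg_iff.mp (dotProduct_star_self_nonneg _)).1
  have hyx : (star y ⬝ᵥ x).re = (star x ⬝ᵥ y).re := by
    rw [← Complex.conj_re, ← Complex.star_def, star_dotProduct, star_star]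
  simp only [star_sub, star_smul, star_trivial, sub_dotProduct, dotProduct_sub, smul_dotProduct,
    dotProduct_smul, Complex.sub_re, Complex.real_smul, Complex.re_ofReal_mul, hyx] at h0
  nlinarith

variable [DecidableEq ι]

lemma mul_re_star_dotProduct_self_le {σ : ι → ℝ} {s : ℝ} (hσ : ∀ i, s ≤ σ i) (d : ι → ℂ) :
    s * (star d ⬝ᵥ d).re ≤ (star d ⬝ᵥ diagonal (Complex.ofReal ∘ σ) *ᵥ d).re := by
  simp only [dotProduct, mulVec_diagonal, Complex.re_sum, Finset.mul_sum]
  refine Finset.sum_le_sum fun i _ => ?_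
  simp only [Pi.star_apply, Function.comp_apply, Complex.star_def, Complex.mul_re,
    Complex.mul_im, Complex.conj_re, Complex.conj_im, Complex.ofReal_re, Complex.ofReal_im]
  nlinarith [hσ i, sq_nonneg (d i).re, sq_nonneg (d i).im]

section

variable {H : Matrix ι ι ℂ}

lemma IsHermitian.re_star_dotProduct_mulVec (hH : H.IsHermitian) (x : ι → ℂ) :
    (star x ⬝ᵥ H *ᵥ x).re =
      ∑ a, hH.eigenvalues a * ‖(star (hH.eigenvectorUnitary : Matrix ι ι ℂ) *ᵥ x) a‖ ^ 2 := by
  set y := star (hH.eigenvectorUnitary : Matrix ι ι ℂ) *ᵥ x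
  have hy : star x ⬝ᵥ H *ᵥ x = star y ⬝ᵥ diagonal (Complex.ofReal ∘ hH.eigenvalues) *ᵥ y := by
    conv_lhs => rw [hH.spectral_theorem]
    simp only [Unitary.conjStarAlgAut_apply, y, star_mulVec, ← mulVec_mulVec,
      dotProduct_mulVec, vecMul_vecMul, ← star_eq_conjTranspose, star_star]
    rfl
  rw [hy]
  simp [dotProduct, Complex.re_sum, mulVec_diagonal, ← Complex.normSq_eq_norm_sq,
    Complex.normSq_apply]
  exact Finset.sum_congr rfl fun a _ => by ring

lemma IsHermitian.re_star_dotProduct_self (hH : H.IsHermitian) (x : ι → ℂ) :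
    (star x ⬝ᵥ x).re = ∑ a, ‖(star (hH.eigenvectorUnitary : Matrix ι ι ℂ) *ᵥ x) a‖ ^ 2 := by
  rw [← Matrix.re_star_dotProduct_self, star_mulVec, ← dotProduct_mulVec, mulVec_mulVec,
    ← star_eq_conjTranspose, star_star, Unitary.mul_star_self_of_mem hH.eigenvectorUnitary.2,
    one_mulVec]

lemma IsHermitian.mul_eigenvectorUnitary (hH : H.IsHermitian) :
    H * hH.eigenvectorUnitary =
      hH.eigenvectorUnitary * diagonal (Complex.ofReal ∘ hH.eigenvalues) := by
  ext i a
  simpa [mul_apply, mulVec, dotProduct, diagonal_apply, mul_comm] using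
    congrFun (hH.mulVec_eigenvectorBasis a) i

end

-- A subspace of dimension `> m - 1 - k` meets the span of the eigenvectors of the `k + 1`
-- smallest eigenvalues nontrivially.
lemma IsHermitian.le_eigenvalues_sort_of_forall_mem {m : ℕ} {H : Matrix (Fin m) (Fin m) ℂ}
    (hH : H.IsHermitian) (S : Submodule ℂ (Fin m → ℂ)) {k : Fin m}
    (hk : m ≤ k + Module.finrank ℂ S) {c : ℝ}
    (hc : ∀ x ∈ S, c * (star x ⬝ᵥ x).re ≤ (star x ⬝ᵥ H *ᵥ x).re) :
    c ≤ hH.eigenvalues (Tuple.sort hH.eigenvalues k) := by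
  set U := (hH.eigenvectorUnitary : Matrix (Fin m) (Fin m) ℂ)
  set σ := Tuple.sort hH.eigenvalues
  let L : S →ₗ[ℂ] (Set.Ioi k → ℂ) :=
    LinearMap.funLeft ℂ ℂ (fun t => σ t) ∘ₗ (star U).mulVecLin ∘ₗ S.subtype
  have hL : LinearMap.ker L ≠ ⊥ := LinearMap.ker_ne_bot_of_finrank_lt <| by
    rw [Module.finrank_fintype_fun_eq_card, Fintype.card_Ioi, Fin.card_Ioi]
    omega
  obtain ⟨⟨x, hxS⟩, hxL, hx0⟩ := Submodule.exists_mem_ne_zero_of_ne_bot hL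
  have hvanish : ∀ t, k < t → (star U *ᵥ x) (σ t) = 0 := fun t ht => congrFun hxL ⟨t, ht⟩
  have hpos : 0 < (star x ⬝ᵥ x).re := by
    have := (dotProduct_star_self_pos_iff (v := x)).2 (by simpa using hx0)
    exact (Complex.pos_iff.mp this).1
  set f : Fin m → ℝ := fun a => ‖(star U *ᵥ x) a‖ ^ 2
  have hle : (star x ⬝ᵥ H *ᵥ x).re ≤ hH.eigenvalues (σ k) * (star x ⬝ᵥ x).re := calc
    _ = ∑ t, hH.eigenvalues (σ t) * f (σ t) :=
      (hH.re_star_dotProduct_mulVec x).trans (Equiv.sum_comp σ _).symm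
    _ ≤ ∑ t, hH.eigenvalues (σ k) * f (σ t) := by
      refine Finset.sum_le_sum fun t _ => ?_
      rcases le_or_gt t k with htk | htk
      · exact mul_le_mul_of_nonneg_right (Tuple.monotone_sort hH.eigenvalues htk) (by positivity)
      · simp [f, hvanish t htk]
    _ = _ := by rw [← Finset.mul_sum, Equiv.sum_comp σ f, hH.re_star_dotProduct_self]
  exact le_of_mul_le_mul_right ((hc x hxS).trans hle) hpos

end Matrix

lemma singularValues_nonneg {m : ℕ} (M : Matrix (Fin m) (Fin m) ℂ) (j : Fin m) :
    0 ≤ singularValues M j :=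
  Real.sqrt_nonneg _

lemma singularValues_antitone {m : ℕ} (M : Matrix (Fin m) (Fin m) ℂ) :
    Antitone (singularValues M) :=
  fun _ _ h => Real.sqrt_le_sqrt (Tuple.monotone_sort
    (isHermitian_conjTranspose_mul_self M).eigenvalues (Fin.rev_le_rev.mpr h))

lemma sq_singularValues {m : ℕ} (M : Matrix (Fin m) (Fin m) ℂ) (j : Fin m) :
    singularValues M j ^ 2 = (isHermitian_conjTranspose_mul_self M).eigenvalues
      (Tuple.sort (isHermitian_conjTranspose_mul_self M).eigenvalues j.rev) :=
  Real.sq_sqrt ((posSemidef_conjTranspose_mul_self M).eigenvalues_nonneg _)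

lemma le_singularValues_of_forall_mem {m : ℕ} (M : Matrix (Fin m) (Fin m) ℂ)
    (S : Submodule ℂ (Fin m → ℂ)) (j : Fin m) (hS : j + 1 ≤ Module.finrank ℂ S) {c : ℝ}
    (hc : ∀ x ∈ S, c ^ 2 * (star x ⬝ᵥ x).re ≤ (star (M *ᵥ x) ⬝ᵥ M *ᵥ x).re) :
    c ≤ singularValues M j := by
  have hH := isHermitian_conjTranspose_mul_self M
  have hk : m ≤ j.rev + Module.finrank ℂ S := by rw [Fin.val_rev]; omega
  refine (le_abs_self c).trans (Real.abs_le_sqrt (hH.le_eigenvalues_sort_of_forall_mem S hk ?_))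
  intro x hx
  simpa [star_mulVec, dotProduct_mulVec, vecMul_vecMul, mulVec_mulVec] using hc x hx

lemma exists_isometry_conjTranspose_mul_self_mul_eq {n : ℕ} (D : Matrix (Fin n) (Fin n) ℂ)
    (j : Fin n) :
    ∃ V : Matrix (Fin n) (Fin (j + 1)) ℂ, Vᴴ * V = 1 ∧
      Dᴴ * D * V = V * diagonal (fun i => (singularValues D (Fin.castLE j.isLt i) : ℂ) ^ 2) := by
  have hH := isHermitian_conjTranspose_mul_self D
  let τ : Fin (j + 1) → Fin n := fun i => Tuple.sort hH.eigenvalues (Fin.castLE j.isLt i).rev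
  have hτ : Function.Injective τ := fun a b h =>
    Fin.castLE_injective _ (Fin.rev_injective ((Tuple.sort hH.eigenvalues).injective h))
  set E := (hH.eigenvectorUnitary : Matrix (Fin n) (Fin n) ℂ)
  refine ⟨E.submatrix id τ, ?_, ?_⟩
  · rw [conjTranspose_submatrix, ← submatrix_mul _ _ _ _ _ Function.bijective_id,
      ← star_eq_conjTranspose, Unitary.star_mul_self_of_mem hH.eigenvectorUnitary.2,
      submatrix_one _ hτ]
  · rw [← submatrix_id_id (Dᴴ * D), ← submatrix_mul _ _ _ _ _ Function.bijective_id,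
      hH.mul_eigenvectorUnitary]
    ext i a
    simp [E, mul_diagonal, τ, ← sq_singularValues]

lemma exists_singular_vectors {n : ℕ} (D : Matrix (Fin n) (Fin n) ℂ) (j : Fin n)
    (hj : 0 < singularValues D j) :
    ∃ (U V : Matrix (Fin n) (Fin (j + 1)) ℂ) (σ : Fin (j + 1) → ℝ),
      Uᴴ * U = 1 ∧ Vᴴ * V = 1 ∧ D * V = U * diagonal (Complex.ofReal ∘ σ) ∧
        Dᴴ * U = V * diagonal (Complex.ofReal ∘ σ) ∧ ∀ i, singularValues D j ≤ σ i := by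
  obtain ⟨V, hVV, hDDV⟩ := exists_isometry_conjTranspose_mul_self_mul_eq D j
  set σ : Fin (j + 1) → ℝ := fun i => singularValues D (Fin.castLE j.isLt i)
  have hσj : ∀ i, singularValues D j ≤ σ i := fun i =>
    singularValues_antitone D (Fin.le_def.mpr (Nat.lt_succ_iff.mp i.isLt))
  have hσ0 : ∀ i, (σ i : ℂ) ≠ 0 := fun i => Complex.ofReal_ne_zero.mpr (hj.trans_le (hσj i)).ne'
  set S := diagonal (Complex.ofReal ∘ σ)
  set Sinv := diagonal (fun i => (σ i : ℂ)⁻¹)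
  rw [show diagonal (fun i => (σ i : ℂ) ^ 2) = S * S by
    simp [S, diagonal_mul_diagonal, sq]] at hDDV
  have hSinvS : Sinv * S = 1 := by
    rw [diagonal_mul_diagonal, ← diagonal_one]
    exact congrArg diagonal (funext fun i => inv_mul_cancel₀ (hσ0 i))
  have hSSinv : S * Sinv = 1 := by
    rw [diagonal_mul_diagonal, ← diagonal_one]
    exact congrArg diagonal (funext fun i => mul_inv_cancel₀ (hσ0 i))
  have hSinv : Sinvᴴ = Sinv := by simp [Sinv, diagonal_conjTranspose]
  refine ⟨D * V * Sinv, V, σ, ?_, hVV, ?_, ?_, hσj⟩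
  · calc (D * V * Sinv)ᴴ * (D * V * Sinv) = Sinvᴴ * (Vᴴ * (Dᴴ * D * V)) * Sinv := by
          simp only [conjTranspose_mul, Matrix.mul_assoc]
      _ = Sinv * S * (S * Sinv) := by
          rw [hDDV, ← Matrix.mul_assoc Vᴴ, hVV, Matrix.one_mul, hSinv, Matrix.mul_assoc,
            Matrix.mul_assoc, Matrix.mul_assoc]
      _ = 1 := by rw [hSinvS, hSSinv, Matrix.one_mul]
  · rw [Matrix.mul_assoc (D * V), hSinvS, Matrix.mul_one]
  · rw [← Matrix.mul_assoc, ← Matrix.mul_assoc, hDDV, Matrix.mul_assoc, Matrix.mul_assoc, hSSinv,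
      Matrix.mul_one]

-- The columns `(uᵢ, vᵢ) / √2` are orthonormal eigenvectors of the Hermitian dilation
-- `[[0, D], [Dᴴ, 0]]`.
lemma exists_isometry_fromBlocks_mul_eq {n : ℕ} (D : Matrix (Fin n) (Fin n) ℂ) (j : Fin n)
    (hj : 0 < singularValues D j) :
    ∃ (W : Matrix (Fin n ⊕ Fin n) (Fin (j + 1)) ℂ) (σ : Fin (j + 1) → ℝ), Wᴴ * W = 1 ∧
      fromBlocks 0 D Dᴴ 0 * W = W * diagonal (Complex.ofReal ∘ σ) ∧
        ∀ i, singularValues D j ≤ σ i := by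
  obtain ⟨U, V, σ, hU, hV, hDV, hDU, hσ⟩ := exists_singular_vectors D j hj
  have hc : star ((√2 : ℝ) : ℂ)⁻¹ * ((√2 : ℝ) : ℂ)⁻¹ * 2 = 1 := by
    rw [Complex.star_def, map_inv₀, Complex.conj_ofReal, ← mul_inv, ← Complex.ofReal_mul,
      Real.mul_self_sqrt zero_le_two]
    norm_num
  refine ⟨((√2 : ℝ) : ℂ)⁻¹ • fromRows U V, σ, ?_, ?_, hσ⟩
  · rw [conjTranspose_smul, Matrix.smul_mul, Matrix.mul_smul, smul_smul,
      conjTranspose_fromRows_eq_fromCols_conjTranspose, fromCols_mul_fromRows, hU, hV,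
      ← two_smul ℂ, smul_smul, hc, one_smul]
  · rw [Matrix.mul_smul, Matrix.smul_mul, fromBlocks_mul_fromRows, fromRows_mul]
    simp [hDV, hDU]

theorem singularValues_le_of_posSemidef_sub {n : ℕ} (D : Matrix (Fin n) (Fin n) ℂ)
    (N : Matrix (Fin (n + n)) (Fin (n + n)) ℂ)
    (hN : (N - reindex finSumFinEquiv finSumFinEquiv (fromBlocks 0 D Dᴴ 0)).PosSemidef)
    (j : Fin n) : singularValues D j ≤ singularValues N (Fin.castAdd n j) := by
  rcases (singularValues_nonneg D j).eq_or_lt with h0 | hj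
  · exact h0 ▸ singularValues_nonneg N _
  obtain ⟨W', σ, hW', hRW', hσ⟩ := exists_isometry_fromBlocks_mul_eq D j hj
  set R := reindex finSumFinEquiv finSumFinEquiv (fromBlocks 0 D Dᴴ 0)
  set W := W'.submatrix finSumFinEquiv.symm id
  have hWW : Wᴴ * W = 1 := by
    rw [conjTranspose_submatrix, submatrix_mul_equiv, submatrix_id_id, hW']
  have hRW : R * W = W * diagonal (Complex.ofReal ∘ σ) := by
    rw [show R = (fromBlocks 0 D Dᴴ 0).submatrix _ _ from reindex_apply .., submatrix_mul_equiv,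
      hRW', submatrix_mul _ _ _ _ _ Function.bijective_id, submatrix_id_id]
  have hinj : Function.Injective W.mulVecLin := fun d d' h => by
    simpa [mulVec_mulVec, hWW] using congrArg (Wᴴ *ᵥ ·) h
  refine le_singularValues_of_forall_mem N (LinearMap.range W.mulVecLin) _
    (by simp [LinearMap.finrank_range_of_inj hinj]) ?_
  rintro _ ⟨d, rfl⟩
  rw [mulVecLin_apply]
  have hNR := (Complex.nonneg_iff.mp (hN.dotProduct_mulVec_nonneg (W *ᵥ d))).1
  rw [sub_mulVec, dotProduct_sub, Complex.sub_re, sub_nonneg] at hNR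
  have hx : star (W *ᵥ d) ⬝ᵥ W *ᵥ d = star d ⬝ᵥ d := by
    simp [star_mulVec, dotProduct_mulVec, vecMul_vecMul, hWW]
  have hRx : star (W *ᵥ d) ⬝ᵥ R *ᵥ W *ᵥ d = star d ⬝ᵥ diagonal (Complex.ofReal ∘ σ) *ᵥ d := by
    simp [star_mulVec, dotProduct_mulVec, vecMul_vecMul, mulVec_mulVec, hRW, ← Matrix.mul_assoc,
      hWW]
  refine sq_mul_re_star_dotProduct_self_le (singularValues_nonneg D j) ?_
  calc singularValues D j * (star (W *ᵥ d) ⬝ᵥ W *ᵥ d).re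
      ≤ (star d ⬝ᵥ diagonal (Complex.ofReal ∘ σ) *ᵥ d).re := by
        rw [hx]
        exact mul_re_star_dotProduct_self_le hσ d
    _ ≤ (star (W *ᵥ d) ⬝ᵥ N *ᵥ W *ᵥ d).re := by
        rw [← hRx]
        exact hNR

/-- Let `A`, `B` be normal `n×n` complex matrices. Then for every index `j`,
`s_j(AB + BA) ≤ s_j((AAᴴ + BBᴴ) ⊕ (AAᴴ + BBᴴ))`. -/
theorem stmt_18 {n : ℕ} (A B : Matrix (Fin n) (Fin n) ℂ)
    (hA : Aᴴ * A = A * Aᴴ) (hB : Bᴴ * B = B * Bᴴ) (j : Fin n) :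
    singularValues (A * B + B * A) j ≤
      singularValues (dsum (A * Aᴴ + B * Bᴴ) (A * Aᴴ + B * Bᴴ)) (Fin.castAdd n j) := by
  apply singularValues_le_of_posSemidef_sub
  set T := fromBlocks A B (-Bᴴ) (-Aᴴ)
  have hT : T * Tᴴ = fromBlocks (A * Aᴴ + B * Bᴴ) 0 0 (A * Aᴴ + B * Bᴴ) -
      fromBlocks 0 (A * B + B * A) (A * B + B * A)ᴴ 0 := by
    rw [fromBlocks_conjTranspose, fromBlocks_multiply, sub_eq_add_neg, fromBlocks_neg,
      fromBlocks_add]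
    congr 1 <;> simp [conjTranspose_mul, hA, hB] <;> abel
  have hTT := (posSemidef_self_mul_conjTranspose T).submatrix finSumFinEquiv.symm
  rw [hT] at hTT
  exact hTT
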